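/- For every complex number α and every integer n ≥ 0 the polynomial identity (2α+1) · x · p_n(x;α+1) = −p_{n+1}(x;α) + α² p_n(x;α) holds in ℂ[x]. -/

import Mathlib

open Polynomial

/-- The polynomials `p_n(x; α)` defined recursively by
`p_0 = 1`, `p_{n+1} = x² p_n'' − x(2x − 1 − 2α) p_n' − ((2α+1)x − α²) p_n`. -/
noncomputable def pseq (α : ℂ) : ℕ → ℂ[X]
  | 0 => 1
  | n + 1 =>
      X ^ 2 * derivative (derivative (pseq α n))
        - X * (2 * X - C (1 + 2 * α)) * derivative (pseq α n)
        - (C (2 * α + 1) * X - C (α ^ 2)) * pseq α n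

/-! Write `L_α` for the second-order operator with `p_{n+1} = L_α p_n`. A direct
computation gives the intertwining relation `L_α (x p) = x L_{α+1} p`, and `α² − L_α` commutes
with `L_α`. Hence `(α² − L_α) p_n(α) = (α² − L_α) L_α^n 1 = L_α^n ((2α+1) x)
= (2α+1) x L_{α+1}^n 1 = (2α+1) x p_n(α+1)`. -/

namespace Pseq

noncomputable def op (α : ℂ) : ℂ[X] →ₗ[ℂ] ℂ[X] :=
  LinearMap.mulLeft ℂ (X ^ 2) ∘ₗ derivative ∘ₗ derivative
    - LinearMap.mulLeft ℂ (X * (2 * X - C (1 + 2 * α))) ∘ₗ derivative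
    - LinearMap.mulLeft ℂ (C (2 * α + 1) * X - C (α ^ 2))

theorem op_apply (α : ℂ) (p : ℂ[X]) :
    op α p = X ^ 2 * derivative (derivative p)
      - X * (2 * X - C (1 + 2 * α)) * derivative p
      - (C (2 * α + 1) * X - C (α ^ 2)) * p := by
  simp [op, mul_assoc]

theorem pseq_succ (α : ℂ) (n : ℕ) : pseq α (n + 1) = op α (pseq α n) := by
  rw [op_apply, pseq]

theorem op_one (α : ℂ) : op α 1 = C (α ^ 2) - C (2 * α + 1) * X := by
  simp only [op_apply, derivative_one, derivative_zero]
  ring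

theorem op_X_mul (α : ℂ) (p : ℂ[X]) : op α (X * p) = X * op (α + 1) p := by
  simp only [op_apply, derivative_mul, derivative_X, one_mul, map_add, map_mul, map_one,
    map_pow, map_ofNat]
  ring

end Pseq

open Pseq in
theorem stmt2 (α : ℂ) (n : ℕ) :
    C (2 * α + 1) * X * pseq (α + 1) n = -pseq α (n + 1) + C (α ^ 2) * pseq α n := by
  induction n with
  | zero => rw [pseq_succ, pseq.eq_1, pseq.eq_1, op_one]; ring
  | succ n ih =>
    calc C (2 * α + 1) * X * pseq (α + 1) (n + 1)
        = (2 * α + 1) • op α (X * pseq (α + 1) n) := by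
          rw [op_X_mul, ← pseq_succ, smul_eq_C_mul, mul_assoc]
      _ = op α (-pseq α (n + 1) + α ^ 2 • pseq α n) := by
          rw [← map_smul, smul_eq_C_mul, ← mul_assoc, ih, smul_eq_C_mul]
      _ = -pseq α (n + 1 + 1) + C (α ^ 2) * pseq α (n + 1) := by
          rw [map_add, map_neg, map_smul, ← pseq_succ, ← pseq_succ, smul_eq_C_mul]
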